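/- Upper bound via the linear program (Theorem 1, bound (12)): suppose random variables X : Ω → 𝒳, Y : Ω → 𝒴, U : Ω → 𝒰 (finite-valued, on a common probability space) satisfy I[X:U] = 0, I[X:U|Y] = 0, and H[Y|(X,U)] = 0. Let S ⊆ ℝ be the set of values Σ_{y ∈ 𝒴} μ(Y = y)·a(y) over all a : 𝒴 → ℝ with a(y) ≥ 0 for all y and Σ_{y ∈ 𝒴} (μ(Y = y) − μ(Y = y | X = x))·a(y) = H[Y | X ← x] − H[Y|X] for every x with μ(X = x) > 0. If S is bounded above, then H[U] ≤ H[Y|X] + sSup S. -/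

import Mathlib

/-!
Take `a y = H[U | Y ← y]`. Conditioning on `X = x` does not change the law of `U` (as
`I[X:U] = 0`), `Y` is a function of `(X, U)`, and given `Y = y` the variables `X` and `U` are
independent, so
`H[U] = H[U | X ← x] = H[(Y,U) | X ← x] = H[Y | X ← x] + ∑ y, μ(Y = y | X = x) a y`.
Averaging over `x` gives `H[U] = H[Y|X] + ∑ y, μ(Y = y) a y`, and subtracting the two identities
shows that `a` is feasible. The information hypotheses become these distributional facts through
the chain rule `H[(Z,W)] = H[W] + ∑ w, μ(W = w) H[Z | W ← w]` and the equality case of Jensen's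
inequality for the strictly concave `negMulLog`.
-/

open MeasureTheory ProbabilityTheory Real

noncomputable section

variable {Ω : Type*} [MeasurableSpace Ω]

/-- Shannon entropy (natural logarithm) of a finite-valued random variable `Z` under `μ`. -/
def ent {S : Type*} [Fintype S] (μ : Measure Ω) (Z : Ω → S) : ℝ :=
  ∑ z : S, Real.negMulLog (μ (Z ⁻¹' {z})).toReal

/-- Conditional entropy `H[Z₁ | Z₂] = H[(Z₁,Z₂)] - H[Z₂]`. -/
def condEnt {S T : Type*} [Fintype S] [Fintype T] (μ : Measure Ω)
    (Z₁ : Ω → S) (Z₂ : Ω → T) : ℝ :=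
  ent μ (fun ω => (Z₁ ω, Z₂ ω)) - ent μ Z₂

/-- Mutual information `I[Z₁ : Z₂] = H[Z₁] + H[Z₂] - H[(Z₁,Z₂)]`. -/
def mutInfo {S T : Type*} [Fintype S] [Fintype T] (μ : Measure Ω)
    (Z₁ : Ω → S) (Z₂ : Ω → T) : ℝ :=
  ent μ Z₁ + ent μ Z₂ - ent μ (fun ω => (Z₁ ω, Z₂ ω))

/-- Conditional mutual information
`I[Z₁ : Z₂ | Z₃] = H[(Z₁,Z₃)] + H[(Z₂,Z₃)] - H[(Z₁,Z₂,Z₃)] - H[Z₃]`. -/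
def condMutInfo {S T R : Type*} [Fintype S] [Fintype T] [Fintype R] (μ : Measure Ω)
    (Z₁ : Ω → S) (Z₂ : Ω → T) (Z₃ : Ω → R) : ℝ :=
  ent μ (fun ω => (Z₁ ω, Z₃ ω)) + ent μ (fun ω => (Z₂ ω, Z₃ ω))
    - ent μ (fun ω => (Z₁ ω, Z₂ ω, Z₃ ω)) - ent μ Z₃

open Finset

lemma preimage_pair_singleton {α S T : Type*} (Z : α → S) (W : α → T) (z : S) (w : T) :
    (fun a => (Z a, W a)) ⁻¹' {(z, w)} = Z ⁻¹' {z} ∩ W ⁻¹' {w} := by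
  rw [← Set.singleton_prod_singleton, Set.mk_preimage_prod]

section Entropy

variable {S T : Type*} [Fintype S] [Fintype T]

lemma ent_nonneg (μ : Measure Ω) [IsZeroOrProbabilityMeasure μ] (Z : Ω → S) : 0 ≤ ent μ Z :=
  sum_nonneg fun _ _ => negMulLog_nonneg ENNReal.toReal_nonneg
    (ENNReal.toReal_le_of_le_ofReal zero_le_one (by simpa using prob_le_one))

lemma ent_comp_equiv (μ : Measure Ω) (Z : Ω → S) (e : S ≃ T) :
    ent μ (fun ω => e (Z ω)) = ent μ Z := by
  unfold ent
  rw [← e.sum_comp]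
  congr! with s
  ext ω
  simp

lemma ent_prod_comm (μ : Measure Ω) (Z : Ω → S) (W : Ω → T) :
    ent μ (fun ω => (Z ω, W ω)) = ent μ (fun ω => (W ω, Z ω)) :=
  ent_comp_equiv μ (fun ω => (W ω, Z ω)) (Equiv.prodComm T S)

lemma mutInfo_comm (μ : Measure Ω) (Z : Ω → S) (W : Ω → T) :
    mutInfo μ Z W = mutInfo μ W Z := by
  rw [mutInfo, mutInfo, ent_prod_comm, add_comm (ent μ Z)]

end Entropy

section Measure

variable {S T R : Type*} [Fintype S] [MeasurableSpace S] [MeasurableSingletonClass S]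
  [Fintype T] [MeasurableSpace T] [MeasurableSingletonClass T]
  [Fintype R] [MeasurableSpace R] [MeasurableSingletonClass R]
  {μ : Measure Ω} {Z : Ω → S} {W : Ω → T} {V : Ω → R}

lemma sum_toReal_measure_inter_preimage [IsFiniteMeasure μ] (hW : Measurable W) (A : Set Ω) :
    ∑ w, (μ (A ∩ W ⁻¹' {w})).toReal = (μ A).toReal := by
  rw [← ENNReal.toReal_sum fun _ _ => measure_ne_top μ _]
  congr 1
  have := sum_measure_preimage_singleton (μ := μ.restrict A) univ fun w _ =>
    hW (measurableSet_singleton w)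
  simpa [Measure.restrict_apply (hW (measurableSet_singleton _)), Set.inter_comm A] using this

lemma toReal_measure_mul_cond [IsFiniteMeasure μ] {s : Set Ω} (hs : MeasurableSet s)
    (t : Set Ω) : (μ s).toReal * (μ[|s] t).toReal = (μ (s ∩ t)).toReal := by
  rw [← ENNReal.toReal_mul, mul_comm, cond_mul_eq_inter hs]

theorem ent_pair_eq_add_sum_cond [IsFiniteMeasure μ] (hZ : Measurable Z) (hW : Measurable W) :
    ent μ (fun ω => (Z ω, W ω))
      = ent μ W + ∑ w, (μ (W ⁻¹' {w})).toReal * ent μ[|W ⁻¹' {w}] Z := by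
  simp only [ent, Fintype.sum_prod_type_right, preimage_pair_singleton, ← sum_add_distrib,
    mul_sum]
  refine sum_congr rfl fun w _ => ?_
  have hw := hW (measurableSet_singleton w)
  -- `∑ z, μ[Z = z | W = w] = 1` unless `μ (W = w) = 0`, where `negMulLog (μ (W = w)) = 0` anyway
  have hmass : (∑ z, (μ[|W ⁻¹' {w}] (Z ⁻¹' {z})).toReal) * negMulLog (μ (W ⁻¹' {w})).toReal
      = negMulLog (μ (W ⁻¹' {w})).toReal := by
    have htot : (μ (W ⁻¹' {w})).toReal * ∑ z, (μ[|W ⁻¹' {w}] (Z ⁻¹' {z})).toReal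
        = (μ (W ⁻¹' {w})).toReal := by
      simp only [mul_sum, toReal_measure_mul_cond (μ := μ) hw]
      exact sum_toReal_measure_inter_preimage (μ := μ) hZ _
    rcases eq_or_ne (μ (W ⁻¹' {w})).toReal 0 with hp | hp
    · simp [hp]
    · rw [mul_left_cancel₀ hp (htot.trans (mul_one _).symm), one_mul]
  simp only [Set.inter_comm (Z ⁻¹' _), ← toReal_measure_mul_cond (μ := μ) hw, negMulLog_mul,
    sum_add_distrib, ← sum_mul, hmass]

lemma sum_toReal_measure_preimage [IsProbabilityMeasure μ] (hW : Measurable W) :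
    ∑ w, (μ (W ⁻¹' {w})).toReal = 1 := by
  simpa using sum_toReal_measure_inter_preimage (μ := μ) hW Set.univ

lemma sum_toReal_measure_mul_cond [IsFiniteMeasure μ] (hW : Measurable W) (A : Set Ω) :
    ∑ w, (μ (W ⁻¹' {w})).toReal * (μ[|W ⁻¹' {w}] A).toReal = (μ A).toReal := by
  simp only [toReal_measure_mul_cond (hW (measurableSet_singleton _)), Set.inter_comm (W ⁻¹' _)]
  exact sum_toReal_measure_inter_preimage hW A

lemma condEnt_eq_sum_cond [IsFiniteMeasure μ] (hZ : Measurable Z) (hW : Measurable W) :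
    condEnt μ Z W = ∑ w, (μ (W ⁻¹' {w})).toReal * ent μ[|W ⁻¹' {w}] Z := by
  rw [condEnt, ent_pair_eq_add_sum_cond hZ hW, add_sub_cancel_left]

lemma ent_cond_eq_zero_of_condEnt_eq_zero [IsFiniteMeasure μ] (hZ : Measurable Z)
    (hW : Measurable W) (h : condEnt μ Z W = 0) {w : T} (hw : μ (W ⁻¹' {w}) ≠ 0) :
    ent μ[|W ⁻¹' {w}] Z = 0 := by
  rw [condEnt_eq_sum_cond hZ hW, sum_eq_zero_iff_of_nonneg fun _ _ =>
    mul_nonneg ENNReal.toReal_nonneg (ent_nonneg _ _)] at h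
  exact (mul_eq_zero.mp (h w (mem_univ w))).resolve_left
    (ENNReal.toReal_ne_zero.mpr ⟨hw, measure_ne_top μ _⟩)

lemma mutInfo_eq_sum_sub_sum_mul_negMulLog_cond [IsFiniteMeasure μ] (hZ : Measurable Z)
    (hW : Measurable W) :
    mutInfo μ Z W = ∑ z, (negMulLog (μ (Z ⁻¹' {z})).toReal
      - ∑ w, (μ (W ⁻¹' {w})).toReal * negMulLog (μ[|W ⁻¹' {w}] (Z ⁻¹' {z})).toReal) := by
  rw [mutInfo, ent_pair_eq_add_sum_cond hZ hW, sum_sub_distrib]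
  simp only [ent, mul_sum]
  rw [sum_comm (γ := S)]
  ring

lemma sum_mul_negMulLog_cond_le [IsProbabilityMeasure μ] (hW : Measurable W) (A : Set Ω) :
    ∑ w, (μ (W ⁻¹' {w})).toReal * negMulLog (μ[|W ⁻¹' {w}] A).toReal
      ≤ negMulLog (μ A).toReal := by
  have := concaveOn_negMulLog.le_map_sum (t := univ) (w := fun w => (μ (W ⁻¹' {w})).toReal)
    (p := fun w => (μ[|W ⁻¹' {w}] A).toReal) (fun _ _ => ENNReal.toReal_nonneg)
    (sum_toReal_measure_preimage hW) (fun _ _ => Set.mem_Ici.mpr ENNReal.toReal_nonneg)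
  simpa only [smul_eq_mul, sum_toReal_measure_mul_cond hW] using this

lemma cond_eq_of_sum_mul_negMulLog_cond_eq [IsProbabilityMeasure μ] (hW : Measurable W)
    (A : Set Ω) (h : ∑ w, (μ (W ⁻¹' {w})).toReal * negMulLog (μ[|W ⁻¹' {w}] A).toReal
      = negMulLog (μ A).toReal) {w : T} (hw : μ (W ⁻¹' {w}) ≠ 0) :
    (μ[|W ⁻¹' {w}] A).toReal = (μ A).toReal := by
  have := strictConcaveOn_negMulLog.map_sum_eq_iff' (t := univ)
    (w := fun w => (μ (W ⁻¹' {w})).toReal) (p := fun w => (μ[|W ⁻¹' {w}] A).toReal)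
    (fun _ _ => ENNReal.toReal_nonneg) (sum_toReal_measure_preimage hW)
    (fun _ _ => Set.mem_Ici.mpr ENNReal.toReal_nonneg)
  simp only [smul_eq_mul, sum_toReal_measure_mul_cond hW] at this
  exact this.mp h.symm w (mem_univ w) (ENNReal.toReal_ne_zero.mpr ⟨hw, measure_ne_top μ _⟩)

theorem mutInfo_nonneg [IsProbabilityMeasure μ] (hZ : Measurable Z) (hW : Measurable W) :
    0 ≤ mutInfo μ Z W := by
  rw [mutInfo_eq_sum_sub_sum_mul_negMulLog_cond hZ hW]
  exact sum_nonneg fun _ _ => sub_nonneg.mpr (sum_mul_negMulLog_cond_le hW _)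

theorem cond_preimage_eq_of_mutInfo_eq_zero [IsProbabilityMeasure μ] (hZ : Measurable Z)
    (hW : Measurable W) (h : mutInfo μ W Z = 0) {w : T} (hw : μ (W ⁻¹' {w}) ≠ 0) (z : S) :
    (μ[|W ⁻¹' {w}] (Z ⁻¹' {z})).toReal = (μ (Z ⁻¹' {z})).toReal := by
  rw [mutInfo_comm, mutInfo_eq_sum_sub_sum_mul_negMulLog_cond hZ hW, sum_eq_zero_iff_of_nonneg
    fun _ _ => sub_nonneg.mpr (sum_mul_negMulLog_cond_le hW _)] at h
  exact cond_eq_of_sum_mul_negMulLog_cond_eq hW _ (sub_eq_zero.mp (h z (mem_univ z))).symm hw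

lemma condMutInfo_eq_sum_cond [IsFiniteMeasure μ] (hZ : Measurable Z) (hW : Measurable W)
    (hV : Measurable V) :
    condMutInfo μ Z W V = ∑ v, (μ (V ⁻¹' {v})).toReal * mutInfo μ[|V ⁻¹' {v}] Z W := by
  have hassoc : ent μ (fun ω => (Z ω, W ω, V ω)) = ent μ (fun ω => ((Z ω, W ω), V ω)) :=
    ent_comp_equiv μ (fun ω => ((Z ω, W ω), V ω)) (Equiv.prodAssoc S T R)
  rw [condMutInfo, hassoc, ent_pair_eq_add_sum_cond hZ hV, ent_pair_eq_add_sum_cond hW hV,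
    ent_pair_eq_add_sum_cond (hZ.prodMk hW) hV]
  simp only [mutInfo, mul_sub, mul_add, sum_sub_distrib, sum_add_distrib]
  ring

lemma mutInfo_cond_eq_zero_of_condMutInfo_eq_zero [IsProbabilityMeasure μ] (hZ : Measurable Z)
    (hW : Measurable W) (hV : Measurable V) (h : condMutInfo μ Z W V = 0) {v : R}
    (hv : μ (V ⁻¹' {v}) ≠ 0) : mutInfo μ[|V ⁻¹' {v}] Z W = 0 := by
  have hterm : ∀ v, 0 ≤ (μ (V ⁻¹' {v})).toReal * mutInfo μ[|V ⁻¹' {v}] Z W := fun v => by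
    by_cases hv : μ (V ⁻¹' {v}) = 0
    · simp [hv]
    · have := cond_isProbabilityMeasure (μ := μ) hv
      exact mul_nonneg ENNReal.toReal_nonneg (mutInfo_nonneg hZ hW)
  rw [condMutInfo_eq_sum_cond hZ hW hV, sum_eq_zero_iff_of_nonneg fun v _ => hterm v] at h
  exact (mul_eq_zero.mp (h v (mem_univ v))).resolve_left
    (ENNReal.toReal_ne_zero.mpr ⟨hv, measure_ne_top μ _⟩)

lemma ent_cond_pair_eq_of_condEnt_eq_zero [IsFiniteMeasure μ] (hZ : Measurable Z)
    (hW : Measurable W) (hV : Measurable V) (h : condEnt μ Z (fun ω => (V ω, W ω)) = 0) (v : R) :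
    ent μ[|V ⁻¹' {v}] (fun ω => (Z ω, W ω)) = ent μ[|V ⁻¹' {v}] W := by
  rw [ent_pair_eq_add_sum_cond hZ hW, add_eq_left]
  refine sum_eq_zero fun w _ => ?_
  by_cases hw : μ[|V ⁻¹' {v}] (W ⁻¹' {w}) = 0
  · simp [hw]
  have hvw := (inter_pos_of_cond_ne_zero (hV (measurableSet_singleton v)) hw).ne'
  rw [cond_cond_eq_cond_inter (hV (measurableSet_singleton v)) (hW (measurableSet_singleton w)),
    ← preimage_pair_singleton, ent_cond_eq_zero_of_condEnt_eq_zero hZ (hV.prodMk hW) h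
      (by rw [preimage_pair_singleton]; exact hvw), mul_zero]

lemma ent_cond_inter_eq_of_condMutInfo_eq_zero [IsProbabilityMeasure μ] (hZ : Measurable Z)
    (hW : Measurable W) (hV : Measurable V) (h : condMutInfo μ Z W V = 0) {z : S} {v : R}
    (hzv : μ (Z ⁻¹' {z} ∩ V ⁻¹' {v}) ≠ 0) :
    ent μ[|Z ⁻¹' {z} ∩ V ⁻¹' {v}] W = ent μ[|V ⁻¹' {v}] W := by
  have hv : μ (V ⁻¹' {v}) ≠ 0 := fun h0 => hzv (measure_mono_null Set.inter_subset_right h0)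
  have := cond_isProbabilityMeasure hv
  have hz : μ[|V ⁻¹' {v}] (Z ⁻¹' {z}) ≠ 0 :=
    (cond_pos_of_inter_ne_zero (hV (measurableSet_singleton v)) (by rwa [Set.inter_comm])).ne'
  rw [Set.inter_comm, ← cond_cond_eq_cond_inter (hV (measurableSet_singleton v))
    (hZ (measurableSet_singleton z))]
  unfold ent
  congr! 2 with w
  exact cond_preimage_eq_of_mutInfo_eq_zero hW hZ
    (mutInfo_cond_eq_zero_of_condMutInfo_eq_zero hZ hW hV h hv) hz w

end Measure

section LinearProgram

variable {𝒳 𝒴 𝒰 : Type*} [Fintype 𝒳] [MeasurableSpace 𝒳] [MeasurableSingletonClass 𝒳]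
  [Fintype 𝒴] [MeasurableSpace 𝒴] [MeasurableSingletonClass 𝒴]
  [Fintype 𝒰] [MeasurableSpace 𝒰] [MeasurableSingletonClass 𝒰]
  {μ : Measure Ω} [IsProbabilityMeasure μ] {X : Ω → 𝒳} {Y : Ω → 𝒴} {U : Ω → 𝒰}

lemma ent_eq_ent_cond_add_sum_cond (hX : Measurable X) (hY : Measurable Y) (hU : Measurable U)
    (h1 : mutInfo μ X U = 0) (h2 : condMutInfo μ X U Y = 0)
    (h3 : condEnt μ Y (fun ω => (X ω, U ω)) = 0) {x : 𝒳} (hx : μ (X ⁻¹' {x}) ≠ 0) :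
    ent μ U = ent μ[|X ⁻¹' {x}] Y
      + ∑ y, (μ[|X ⁻¹' {x}] (Y ⁻¹' {y})).toReal * ent μ[|Y ⁻¹' {y}] U := by
  have := cond_isProbabilityMeasure hx
  have hU_law : ent μ[|X ⁻¹' {x}] U = ent μ U := by
    unfold ent
    congr! 2 with u
    exact cond_preimage_eq_of_mutInfo_eq_zero hU hX h1 hx u
  calc ent μ U = ent μ[|X ⁻¹' {x}] (fun ω => (Y ω, U ω)) := by
        rw [ent_cond_pair_eq_of_condEnt_eq_zero hY hU hX h3, hU_law]
    _ = ent μ[|X ⁻¹' {x}] (fun ω => (U ω, Y ω)) := ent_prod_comm _ _ _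
    _ = _ := by
        rw [ent_pair_eq_add_sum_cond hU hY]
        congr 1
        refine sum_congr rfl fun y _ => ?_
        by_cases hy : μ[|X ⁻¹' {x}] (Y ⁻¹' {y}) = 0
        · simp [hy]
        rw [cond_cond_eq_cond_inter (hX (measurableSet_singleton x))
            (hY (measurableSet_singleton y)),
          ent_cond_inter_eq_of_condMutInfo_eq_zero hX hU hY h2
            (inter_pos_of_cond_ne_zero (hX (measurableSet_singleton x)) hy).ne']

lemma ent_eq_condEnt_add_sum_cond (hX : Measurable X) (hY : Measurable Y) (hU : Measurable U)
    (h1 : mutInfo μ X U = 0) (h2 : condMutInfo μ X U Y = 0)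
    (h3 : condEnt μ Y (fun ω => (X ω, U ω)) = 0) :
    ent μ U = condEnt μ Y X + ∑ y, (μ (Y ⁻¹' {y})).toReal * ent μ[|Y ⁻¹' {y}] U := by
  have hslice : ∀ x, (μ (X ⁻¹' {x})).toReal * ent μ U
      = (μ (X ⁻¹' {x})).toReal * ent μ[|X ⁻¹' {x}] Y
        + ∑ y, (μ (X ⁻¹' {x} ∩ Y ⁻¹' {y})).toReal * ent μ[|Y ⁻¹' {y}] U := fun x => by
    by_cases hx : μ (X ⁻¹' {x}) = 0
    · simp [hx, measure_inter_null_of_null_left]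
    rw [ent_eq_ent_cond_add_sum_cond hX hY hU h1 h2 h3 hx, mul_add, mul_sum]
    simp only [← mul_assoc, toReal_measure_mul_cond (hX (measurableSet_singleton x))]
  calc ent μ U = ∑ x, (μ (X ⁻¹' {x})).toReal * ent μ U := by
        rw [← sum_mul, sum_toReal_measure_preimage hX, one_mul]
    _ = ∑ x, (μ (X ⁻¹' {x})).toReal * ent μ[|X ⁻¹' {x}] Y
        + ∑ y, ∑ x, (μ (X ⁻¹' {x} ∩ Y ⁻¹' {y})).toReal * ent μ[|Y ⁻¹' {y}] U := by
        rw [sum_comm (γ := 𝒴), ← sum_add_distrib]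
        exact sum_congr rfl fun x _ => hslice x
    _ = _ := by
        simp only [condEnt_eq_sum_cond hY hX, ← sum_mul, Set.inter_comm (X ⁻¹' _),
          sum_toReal_measure_inter_preimage hX]

end LinearProgram

theorem entropy_upper_bound_linear_program_general {𝒳 𝒴 𝒰 : Type*} [Fintype 𝒳] [MeasurableSpace 𝒳] [MeasurableSingletonClass 𝒳]
    [Fintype 𝒴] [MeasurableSpace 𝒴] [MeasurableSingletonClass 𝒴]
    [Fintype 𝒰] [MeasurableSpace 𝒰] [MeasurableSingletonClass 𝒰]
    (μ : Measure Ω) [IsProbabilityMeasure μ]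
    (X : Ω → 𝒳) (Y : Ω → 𝒴) (U : Ω → 𝒰)
    (hX : Measurable X) (hY : Measurable Y) (hU : Measurable U)
    (h1 : mutInfo μ X U = 0)
    (h2 : condMutInfo μ X U Y = 0)
    (h3 : condEnt μ Y (fun ω => (X ω, U ω)) = 0)
    (S : Set ℝ)
    (hS : S = {s : ℝ | ∃ a : 𝒴 → ℝ, (∀ y : 𝒴, 0 ≤ a y) ∧
      (∀ x : 𝒳, 0 < μ (X ⁻¹' {x}) →
        ∑ y : 𝒴, ((μ (Y ⁻¹' {y})).toReal - ((μ[|X ⁻¹' {x}]) (Y ⁻¹' {y})).toReal) * a y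
          = ent (μ[|X ⁻¹' {x}]) Y - condEnt μ Y X) ∧
      s = ∑ y : 𝒴, (μ (Y ⁻¹' {y})).toReal * a y})
    (hbdd : BddAbove S) :
    ent μ U ≤ condEnt μ Y X + sSup S := by
  have hglobal := ent_eq_condEnt_add_sum_cond hX hY hU h1 h2 h3
  have hfeasible : ∑ y, (μ (Y ⁻¹' {y})).toReal * ent μ[|Y ⁻¹' {y}] U ∈ S := by
    refine hS ▸ ⟨fun y => ent μ[|Y ⁻¹' {y}] U, fun y => ent_nonneg _ _, fun x hx => ?_, rfl⟩
    have hlocal := ent_eq_ent_cond_add_sum_cond hX hY hU h1 h2 h3 hx.ne'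
    simp only [sub_mul, sum_sub_distrib]
    linarith
  linarith [le_csSup hbdd hfeasible]

/-- Upper bound via the linear program (Theorem 1, bound (12)). -/
theorem entropy_upper_bound_linear_program {𝒳 𝒴 𝒰 : Type*} [Fintype 𝒳] [Nonempty 𝒳] [MeasurableSpace 𝒳] [MeasurableSingletonClass 𝒳]
    [Fintype 𝒴] [Nonempty 𝒴] [MeasurableSpace 𝒴] [MeasurableSingletonClass 𝒴]
    [Fintype 𝒰] [Nonempty 𝒰] [MeasurableSpace 𝒰] [MeasurableSingletonClass 𝒰]
    (μ : Measure Ω) [IsProbabilityMeasure μ]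
    (X : Ω → 𝒳) (Y : Ω → 𝒴) (U : Ω → 𝒰)
    (hX : Measurable X) (hY : Measurable Y) (hU : Measurable U)
    (h1 : mutInfo μ X U = 0)
    (h2 : condMutInfo μ X U Y = 0)
    (h3 : condEnt μ Y (fun ω => (X ω, U ω)) = 0)
    (S : Set ℝ)
    (hS : S = {s : ℝ | ∃ a : 𝒴 → ℝ, (∀ y : 𝒴, 0 ≤ a y) ∧
      (∀ x : 𝒳, 0 < μ (X ⁻¹' {x}) →
        ∑ y : 𝒴, ((μ (Y ⁻¹' {y})).toReal - ((μ[|X ⁻¹' {x}]) (Y ⁻¹' {y})).toReal) * a y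
          = ent (μ[|X ⁻¹' {x}]) Y - condEnt μ Y X) ∧
      s = ∑ y : 𝒴, (μ (Y ⁻¹' {y})).toReal * a y})
    (hbdd : BddAbove S) :
    ent μ U ≤ condEnt μ Y X + sSup S :=
  entropy_upper_bound_linear_program_general μ X Y U hX hY hU h1 h2 h3 S hS hbdd
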